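/- arXiv:2202.00920 — 3 statements merged into one kernel-verified Lean document; each statement's English description precedes it below -/
import Mathlib

section
/- Let S be a numerical semigroup with S ≠ {0} ∪ {x ∈ ℕ : x ≥ m(S)}, and let T = S ∪ γ(S). Then: (1) T is a numerical semigroup; (2) S \ {0} is an ideal of T; (3) m(T) = m(S); (4) C(T) = C(S) − 1. -/
/-- A numerical semigroup: a subset of ℕ containing 0, closed under addition,
with finite complement. -/
def IsNumSgp (S : Set ℕ) : Prop :=
  0 ∈ S ∧ (∀ a ∈ S, ∀ b ∈ S, a + b ∈ S) ∧ Sᶜ.Finite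

/-- Pseudo-Frobenius numbers of `S`. -/
def PF (S : Set ℕ) : Set ℕ :=
  {x | x ∉ S ∧ ∀ s ∈ S, s ≠ 0 → x + s ∈ S}

/-- `I` is an ideal of `Δ`: nonempty, contained in `Δ`, and `I + Δ ⊆ I`. -/
def IsIdealOf (I Δ : Set ℕ) : Prop :=
  I.Nonempty ∧ I ⊆ Δ ∧ ∀ a ∈ I, ∀ b ∈ Δ, a + b ∈ I

/-- `A` is an i(S)-pertinent set. -/
def IsPertinent (A S : Set ℕ) : Prop :=
  A ⊆ PF S ∧ ∀ a ∈ A, ∀ b ∈ A, a + b ∈ PF S → a + b ∈ A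

/-- Iterates 𝒥^k(ℕ): 𝒥^0(ℕ) = {ℕ}, 𝒥^{k+1}(ℕ) = 𝒥(𝒥^k(ℕ)). -/
def Jiter : ℕ → Set (Set ℕ)
  | 0 => {Set.univ}
  | k + 1 => {S | IsNumSgp S ∧ ∃ Δ ∈ Jiter k, IsIdealOf (S \ {0}) Δ}

/-- An i-chain of length `n` connecting `S` and `T`. -/
def IsIChain (n : ℕ) (c : ℕ → Set ℕ) (S T : Set ℕ) : Prop :=
  c 0 = S ∧ c n = T ∧ (∀ i ≤ n, IsNumSgp (c i)) ∧
    ∀ i < n, c i ⊆ c (i + 1) ∧ IsIdealOf (c i \ {0}) (c (i + 1))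

/-- The complexity of a numerical semigroup. -/
noncomputable def complexity (S : Set ℕ) : ℕ := sInf {k | S ∈ Jiter k}

/-- The multiplicity: the least nonzero element. -/
noncomputable def mult (S : Set ℕ) : ℕ := sInf (S \ {0})

/-- The Frobenius number, as an integer: the largest integer not in `S`. -/
noncomputable def Frob (S : Set ℕ) : ℤ := sSup {z : ℤ | ¬ ∃ n ∈ S, (n : ℤ) = z}

/-- Ordinary numerical semigroup. -/
def IsOrdinary (S : Set ℕ) : Prop := S = {0} ∪ {x : ℕ | mult S ≤ x}

/-- The set γ(S) = {x ∈ ℕ \ S : ⌊F(S)/m(S)⌋·m(S) ≤ x ≤ F(S)}. -/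
noncomputable def gamma (S : Set ℕ) : Set ℕ :=
  {x : ℕ | x ∉ S ∧ ⌊(Frob S : ℚ) / (mult S : ℚ)⌋ * (mult S : ℤ) ≤ (x : ℤ) ∧ (x : ℤ) ≤ Frob S}

/-- The minimal system of generators of `T`: the elements of `T` that are not
generated by the other elements. -/
def msg (T : Set ℕ) : Set ℕ :=
  {x ∈ T | x ∉ (AddSubmonoid.closure (T \ {x}) : Set ℕ)}

-- AUX START
open Set

noncomputable def FN (S : Set ℕ) : ℕ := sSup Sᶜ

section

variable {S : Set ℕ}

lemma FN_notMem (hS : IsNumSgp S) (hU : S ≠ univ) : FN S ∉ S :=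
  Nat.sSup_mem (Set.nonempty_compl.mpr hU) hS.2.2.bddAbove

lemma le_FN (hS : IsNumSgp S) {x : ℕ} (hx : x ∉ S) : x ≤ FN S :=
  le_csSup hS.2.2.bddAbove hx

lemma mem_of_FN_lt (hS : IsNumSgp S) {x : ℕ} (hx : FN S < x) : x ∈ S := by
  by_contra h; exact absurd (le_FN hS h) (not_le.mpr hx)

lemma sdiff_nonempty' (hS : IsNumSgp S) : (S \ {0}).Nonempty :=
  ⟨FN S + 1, mem_of_FN_lt hS (by omega), by simp⟩

lemma mult_mem (hS : IsNumSgp S) : mult S ∈ S ∧ mult S ≠ 0 := by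
  have h := Nat.sInf_mem (sdiff_nonempty' hS)
  exact ⟨h.1, fun h0 => h.2 h0⟩

lemma mult_le (hS : IsNumSgp S) {x : ℕ} (hx : x ∈ S) (h0 : x ≠ 0) : mult S ≤ x :=
  Nat.sInf_le ⟨hx, h0⟩

lemma frob_eq (hS : IsNumSgp S) (hU : S ≠ univ) : Frob S = (FN S : ℤ) := by
  apply IsGreatest.csSup_eq
  constructor
  · rintro ⟨n, hn, hcast⟩
    have hn' : n = FN S := by exact_mod_cast hcast
    exact FN_notMem hS hU (hn' ▸ hn)
  · rintro z hz
    by_contra h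
    push_neg at h
    have hz0 : 0 ≤ z := le_trans (Int.ofNat_nonneg _) h.le
    apply hz
    refine ⟨z.toNat, mem_of_FN_lt hS (by omega), by omega⟩

lemma gamma_eq (hS : IsNumSgp S) (hU : S ≠ univ) :
    gamma S = {x : ℕ | x ∉ S ∧ FN S / mult S * mult S ≤ x ∧ x ≤ FN S} := by
  have hm : mult S ≠ 0 := (mult_mem hS).2
  ext x
  simp only [gamma, mem_setOf_eq, frob_eq hS hU]
  have hfl : ⌊((FN S : ℤ) : ℚ) / ((mult S : ℕ) : ℚ)⌋ = (FN S : ℤ) / (mult S : ℤ) := by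
    rw [show ((mult S : ℕ) : ℚ) = (((mult S : ℕ) : ℤ) : ℚ) by push_cast; ring]
    exact_mod_cast Rat.floor_intCast_div_natCast (FN S : ℤ) (mult S)
  rw [hfl]
  constructor
  · rintro ⟨h1, h2, h3⟩
    exact ⟨h1, by exact_mod_cast h2, by exact_mod_cast h3⟩
  · rintro ⟨h1, h2, h3⟩
    exact ⟨h1, by exact_mod_cast h2, by exact_mod_cast h3⟩

end

section
variable {S : Set ℕ}

lemma mult_pos (hS : IsNumSgp S) : 0 < mult S := Nat.pos_of_ne_zero (mult_mem hS).2

lemma hU_of_hq (hS : IsNumSgp S) (hq : mult S ≤ FN S) : S ≠ univ := by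
  intro h
  subst h
  have h0 : FN (univ : Set ℕ) = 0 := by simp [FN, Set.compl_univ]
  rw [h0] at hq
  have := mult_pos hS
  omega

lemma q_pos (hS : IsNumSgp S) (hq : mult S ≤ FN S) : 1 ≤ FN S / mult S :=
  (Nat.one_le_div_iff (mult_pos hS)).mpr hq

lemma FN_lt_qm (hS : IsNumSgp S) : FN S < (FN S / mult S + 1) * mult S :=
  (Nat.div_lt_iff_lt_mul (mult_pos hS)).mp (Nat.lt_succ_self _)

lemma mem_of_qm_le (hS : IsNumSgp S) {x : ℕ}
    (hx : (FN S / mult S + 1) * mult S ≤ x) : x ∈ S :=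
  mem_of_FN_lt hS (lt_of_lt_of_le (FN_lt_qm hS) hx)

lemma mem_of_add (hS : IsNumSgp S) {a b : ℕ} (h1 : mult S ≤ a)
    (h2 : FN S / mult S * mult S ≤ b) : a + b ∈ S := by
  apply mem_of_qm_le hS
  rw [add_mul, one_mul, add_comm a b]
  exact Nat.add_le_add h2 h1

lemma m_le_qm (hS : IsNumSgp S) (hq : mult S ≤ FN S) :
    mult S ≤ FN S / mult S * mult S :=
  Nat.le_mul_of_pos_left (mult S) (q_pos hS hq)

lemma T_numsgp (hS : IsNumSgp S) (hq : mult S ≤ FN S) : IsNumSgp (S ∪ gamma S) := by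
  have hU := hU_of_hq hS hq
  have hmq := m_le_qm hS hq
  rw [gamma_eq hS hU]
  refine ⟨Or.inl hS.1, ?_, hS.2.2.subset fun x hx => fun hxS => hx (Or.inl hxS)⟩
  rintro a (ha | ⟨ha1, ha2, ha3⟩) b (hb | ⟨hb1, hb2, hb3⟩)
  · exact Or.inl (hS.2.1 a ha b hb)
  · rcases Nat.eq_zero_or_pos a with rfl | hapos
    · rw [zero_add]; exact Or.inr ⟨hb1, hb2, hb3⟩
    · exact Or.inl (mem_of_add hS (mult_le hS ha (by omega)) hb2)
  · rcases Nat.eq_zero_or_pos b with rfl | hbpos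
    · rw [add_zero]; exact Or.inr ⟨ha1, ha2, ha3⟩
    · rw [add_comm]
      exact Or.inl (mem_of_add hS (mult_le hS hb (by omega)) ha2)
  · exact Or.inl (mem_of_add hS (le_trans hmq ha2) hb2)

lemma T_ideal (hS : IsNumSgp S) (hq : mult S ≤ FN S) :
    IsIdealOf (S \ {0}) (S ∪ gamma S) := by
  have hU := hU_of_hq hS hq
  refine ⟨sdiff_nonempty' hS, fun x hx => Or.inl hx.1, ?_⟩
  rintro a ⟨haS, ha0⟩ b hb
  have ha0' : a ≠ 0 := ha0
  have haM : mult S ≤ a := mult_le hS haS ha0'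
  rcases hb with hbS | hbγ
  · exact ⟨hS.2.1 a haS b hbS, by simp; omega⟩
  · rw [gamma_eq hS hU] at hbγ
    exact ⟨mem_of_add hS haM hbγ.2.1, by simp; omega⟩

lemma T_mult (hS : IsNumSgp S) (hq : mult S ≤ FN S) :
    mult (S ∪ gamma S) = mult S := by
  have hU := hU_of_hq hS hq
  have hm := mult_mem hS
  have hmq := m_le_qm hS hq
  have hmem : mult S ∈ (S ∪ gamma S) \ {0} := ⟨Or.inl hm.1, hm.2⟩
  apply le_antisymm (Nat.sInf_le hmem)
  apply le_csInf ⟨mult S, hmem⟩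
  rintro x ⟨hx | hx, hx0⟩
  · exact mult_le hS hx hx0
  · rw [gamma_eq hS hU] at hx
    exact le_trans hmq hx.2.1

lemma exists_gap (hS : IsNumSgp S) (hq : mult S ≤ FN S) :
    ∃ x, x ∉ S ∧ (FN S / mult S - 1) * mult S ≤ x ∧ x < FN S / mult S * mult S := by
  have hU := hU_of_hq hS hq
  have hm := mult_mem hS
  have hq1 := q_pos hS hq
  have e1 : (FN S / mult S - 1) * mult S + mult S = FN S / mult S * mult S := by
    conv_rhs => rw [show FN S / mult S = (FN S / mult S - 1) + 1 by omega, add_mul, one_mul]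
  have hqm : FN S / mult S * mult S ≤ FN S := Nat.div_mul_le_self _ _
  have hlt : FN S < FN S / mult S * mult S + mult S := by
    have := FN_lt_qm hS
    rwa [add_mul, one_mul] at this
  by_contra h
  push_neg at h
  apply FN_notMem hS hU
  have hFm : FN S - mult S ∈ S := by
    by_contra hFm
    have h1 := h _ hFm (by omega)
    omega
  have hsum : FN S - mult S + mult S ∈ S := hS.2.1 _ hFm _ hm.1
  have he : FN S - mult S + mult S = FN S := by omega
  rwa [← he]

end

section
variable {S : Set ℕ}

lemma compl_T (hS : IsNumSgp S) (hq : mult S ≤ FN S) :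
    (S ∪ gamma S)ᶜ = {x : ℕ | x ∉ S ∧ x < FN S / mult S * mult S} := by
  have hU := hU_of_hq hS hq
  ext x
  simp only [gamma_eq hS hU, mem_compl_iff, mem_union, mem_setOf_eq, not_or]
  constructor
  · rintro ⟨h1, h2⟩
    refine ⟨h1, ?_⟩
    by_contra h3
    exact h2 ⟨h1, by omega, le_FN hS h1⟩
  · rintro ⟨h1, h2⟩
    exact ⟨h1, fun h3 => by omega⟩

lemma T_ne_univ (hS : IsNumSgp S) (hq : mult S ≤ FN S) : S ∪ gamma S ≠ univ := by
  obtain ⟨x, hx1, _, hx3⟩ := exists_gap hS hq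
  intro h
  have : x ∈ (S ∪ gamma S)ᶜ := by
    rw [compl_T hS hq]; exact ⟨hx1, hx3⟩
  rw [h] at this
  simp at this

lemma T_FN (hS : IsNumSgp S) (hq : mult S ≤ FN S) :
    FN (S ∪ gamma S) / mult S + 1 = FN S / mult S := by
  have hq1 := q_pos hS hq
  have hT := T_numsgp hS hq
  have hTU := T_ne_univ hS hq
  obtain ⟨x, hx1, hx2, hx3⟩ := exists_gap hS hq
  have hxT : x ∈ (S ∪ gamma S)ᶜ := by rw [compl_T hS hq]; exact ⟨hx1, hx3⟩
  have hle : x ≤ FN (S ∪ gamma S) := le_FN hT hxT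
  have hFNT : FN (S ∪ gamma S) ∈ (S ∪ gamma S)ᶜ := FN_notMem hT hTU
  rw [compl_T hS hq] at hFNT
  have hdiv : FN (S ∪ gamma S) / mult S = FN S / mult S - 1 := by
    apply Nat.div_eq_of_lt_le (le_trans hx2 hle)
    have e1 : (FN S / mult S - 1) * mult S + mult S = FN S / mult S * mult S := by
      conv_rhs => rw [show FN S / mult S = (FN S / mult S - 1) + 1 by omega, add_mul, one_mul]
    calc FN (S ∪ gamma S) < FN S / mult S * mult S := hFNT.2
    _ = Nat.succ (FN S / mult S - 1) * mult S := by rw [Nat.succ_eq_add_one, add_mul, one_mul]; omega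
  omega

lemma univ_numsgp : IsNumSgp (univ : Set ℕ) :=
  ⟨trivial, fun _ _ _ _ => trivial, by simp⟩

lemma jiter_numsgp {Δ : Set ℕ} {k : ℕ} (h : Δ ∈ Jiter k) : IsNumSgp Δ := by
  cases k with
  | zero => rw [show Δ = univ from h]; exact univ_numsgp
  | succ k => exact h.1

lemma jiter_upper : ∀ q (S : Set ℕ), IsNumSgp S → S ≠ univ →
    FN S / mult S = q → S ∈ Jiter (q + 1) := by
  intro q
  induction q using Nat.strong_induction_on with
  | _ q ih =>
    intro S hS hU hdiv
    rcases Nat.eq_zero_or_pos q with rfl | hqpos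
    · have hm0 := mult_pos hS
      have hFN : FN S < mult S := by
        by_contra h
        push_neg at h
        have := q_pos hS h
        omega
      refine ⟨hS, univ, rfl, sdiff_nonempty' hS, subset_univ _, ?_⟩
      rintro a ⟨haS, ha0⟩ b _
      have ha0' : a ≠ 0 := ha0
      have haM : mult S ≤ a := mult_le hS haS ha0'
      exact ⟨mem_of_FN_lt hS (by omega), by simp; omega⟩
    · have hq : mult S ≤ FN S := by
        by_contra h
        push_neg at h
        rw [Nat.div_eq_of_lt h] at hdiv
        omega
      have hT := T_numsgp hS hq
      have hTU := T_ne_univ hS hq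
      have hTdiv : FN (S ∪ gamma S) / mult (S ∪ gamma S) = q - 1 := by
        rw [T_mult hS hq]
        have := T_FN hS hq
        omega
      have hTJ : S ∪ gamma S ∈ Jiter (q - 1 + 1) := ih (q - 1) (by omega) _ hT hTU hTdiv
      rw [show q - 1 + 1 = q by omega] at hTJ
      exact ⟨hS, S ∪ gamma S, hTJ, T_ideal hS hq⟩

lemma jiter_lower : ∀ k (S : Set ℕ), S ∈ Jiter k → S ≠ univ →
    FN S / mult S + 1 ≤ k := by
  intro k
  induction k with
  | zero => intro S hSk hU; exact absurd hSk hU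
  | succ k ih =>
    rintro S ⟨hS, Δ, hΔk, hid⟩ hU
    have hm := mult_mem hS
    by_cases hΔU : Δ = univ
    · subst hΔU
      have hall : ∀ x : ℕ, mult S ≤ x → x ∈ S := by
        intro x hx
        have := hid.2.2 (mult S) ⟨hm.1, hm.2⟩ (x - mult S) trivial
        rw [show mult S + (x - mult S) = x by omega] at this
        exact this.1
      have hFN : FN S < mult S := by
        by_contra h
        push_neg at h
        exact FN_notMem hS hU (hall _ h)
      rw [Nat.div_eq_of_lt hFN]
      omega
    · have hΔ : IsNumSgp Δ := jiter_numsgp hΔk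
      have hle := ih Δ hΔk hΔU
      have hmΔ : mult Δ ≤ mult S := mult_le hΔ (hid.2.1 ⟨hm.1, hm.2⟩) hm.2
      have hmΔ0 := mult_pos hΔ
      have hFS : FN S ≤ FN Δ + mult S := by
        by_contra h
        push_neg at h
        apply FN_notMem hS hU
        have hb : FN S - mult S ∈ Δ := mem_of_FN_lt hΔ (by omega)
        have := hid.2.2 (mult S) ⟨hm.1, hm.2⟩ _ hb
        rw [show mult S + (FN S - mult S) = FN S by omega] at this
        exact this.1
      have c1 : FN S / mult S ≤ (FN Δ + mult S) / mult S := Nat.div_le_div_right hFS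
      rw [Nat.add_div_right _ (mult_pos hS)] at c1
      have c2 : FN Δ / mult S ≤ FN Δ / mult Δ := Nat.div_le_div_left hmΔ hmΔ0
      omega

lemma complexity_eq (hS : IsNumSgp S) (hU : S ≠ univ) :
    complexity S = FN S / mult S + 1 := by
  have h1 : S ∈ Jiter (FN S / mult S + 1) := jiter_upper _ S hS hU rfl
  apply le_antisymm (Nat.sInf_le h1)
  have hne : {k | S ∈ Jiter k}.Nonempty := ⟨FN S / mult S + 1, h1⟩
  have h2 := Nat.sInf_mem hne
  exact jiter_lower _ S h2 hU

end


/-- if `S` is a non-ordinary numerical semigroup and `T = S ∪ γ(S)`,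
then `T` is a numerical semigroup, `S \ {0}` is an ideal of `T`, `m(T) = m(S)` and
`C(T) = C(S) - 1`. -/
theorem stmt15 (S : Set ℕ) (hS : IsNumSgp S)
    (hne : S ≠ ({0} : Set ℕ) ∪ {x : ℕ | mult S ≤ x}) :
    IsNumSgp (S ∪ gamma S) ∧
    IsIdealOf (S \ {0}) (S ∪ gamma S) ∧
    mult (S ∪ gamma S) = mult S ∧
    complexity (S ∪ gamma S) + 1 = complexity S := by
  have hm := mult_mem hS
  have hym : ∃ y, mult S ≤ y ∧ y ∉ S := by
    by_contra h
    push_neg at h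
    apply hne
    ext x
    constructor
    · intro hx
      rcases eq_or_ne x 0 with rfl | hx0
      · exact Or.inl rfl
      · exact Or.inr (mult_le hS hx hx0)
    · rintro (hx | hx)
      · rw [show x = 0 from hx]; exact hS.1
      · exact h x hx
  obtain ⟨y, hy1, hy2⟩ := hym
  have hU : S ≠ univ := fun h => hy2 (h ▸ trivial)
  have hq : mult S ≤ FN S := le_trans hy1 (le_FN hS hy2)
  refine ⟨T_numsgp hS hq, T_ideal hS hq, T_mult hS hq, ?_⟩
  have hC : complexity (S ∪ gamma S) = FN (S ∪ gamma S) / mult (S ∪ gamma S) + 1 :=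
    complexity_eq (T_numsgp hS hq) (T_ne_univ hS hq)
  rw [complexity_eq hS hU, hC, T_mult hS hq]
  have hT := T_FN hS hq
  omega
end

section
/- Let S be a numerical semigroup, and define the sequence S_0 = S and S_{n+1} = S_n ∪ γ(S_n) if S_n ≠ ℕ, S_{n+1} = ℕ otherwise. Then S_{C(S)} = ℕ and S_n ≠ ℕ for all n < C(S); that is, C(S) is exactly the least index at which this sequence reaches ℕ. -/
-- auxiliary
noncomputable def nF (S : Set ℕ) : ℕ := sSup Sᶜ

lemma aux_univ_of_one_mem {S : Set ℕ} (hS : IsNumSgp S) (h1 : 1 ∈ S) : S = Set.univ := by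
  ext x
  simp only [Set.mem_univ, iff_true]
  induction x with
  | zero => exact hS.1
  | succ n ih => exact hS.2.1 n ih 1 h1

lemma aux_one_notin {S : Set ℕ} (hS : IsNumSgp S) (hne : S ≠ Set.univ) : 1 ∉ S :=
  fun h => hne (aux_univ_of_one_mem hS h)

lemma aux_nF_mem {S : Set ℕ} (hS : IsNumSgp S) (hne : S ≠ Set.univ) :
    nF S ∉ S ∧ 1 ≤ nF S ∧ ∀ x, nF S < x → x ∈ S := by
  have h1 : (1 : ℕ) ∈ Sᶜ := aux_one_notin hS hne
  have hbdd : BddAbove Sᶜ := hS.2.2.bddAbove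
  have hmem : nF S ∈ Sᶜ := Nat.sSup_mem ⟨1, h1⟩ hbdd
  refine ⟨hmem, le_csSup hbdd h1, fun x hx => ?_⟩
  by_contra hxS
  exact absurd (le_csSup hbdd hxS) (not_le.mpr hx)

lemma aux_mult_mem {S : Set ℕ} (hS : IsNumSgp S) (hne : S ≠ Set.univ) :
    mult S ∈ S ∧ 2 ≤ mult S ∧ ∀ x ∈ S, x ≠ 0 → mult S ≤ x := by
  obtain ⟨hF, hF1, hbig⟩ := aux_nF_mem hS hne
  have hne' : (S \ {0}).Nonempty := ⟨nF S + 1, hbig _ (Nat.lt_succ_self _), by simp⟩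
  have hmem := Nat.sInf_mem hne'
  have hle : ∀ x ∈ S, x ≠ 0 → mult S ≤ x := fun x hx hx0 => Nat.sInf_le ⟨hx, hx0⟩
  refine ⟨hmem.1, ?_, hle⟩
  have h0 : mult S ≠ 0 := hmem.2
  have h1 : mult S ≠ 1 := fun h => aux_one_notin hS hne (h ▸ hmem.1)
  omega

lemma aux_Frob_eq {S : Set ℕ} (hS : IsNumSgp S) (hne : S ≠ Set.univ) :
    Frob S = (nF S : ℤ) := by
  obtain ⟨hF, hF1, hbig⟩ := aux_nF_mem hS hne
  have hmem : (nF S : ℤ) ∈ {z : ℤ | ¬ ∃ n ∈ S, (n : ℤ) = z} := by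
    rintro ⟨n, hn, hcast⟩
    have : n = nF S := by exact_mod_cast hcast
    exact hF (this ▸ hn)
  have hub : ∀ z ∈ {z : ℤ | ¬ ∃ n ∈ S, (n : ℤ) = z}, z ≤ (nF S : ℤ) := by
    intro z hz
    rcases le_or_gt z (nF S : ℤ) with h | h
    · exact h
    · exfalso
      have hz0 : 0 ≤ z := le_trans (Int.natCast_nonneg _) h.le
      obtain ⟨n, rfl⟩ := Int.eq_ofNat_of_zero_le hz0
      exact hz ⟨n, hbig n (by exact_mod_cast h), rfl⟩
  exact le_antisymm (csSup_le ⟨_, hmem⟩ hub) (le_csSup ⟨_, hub⟩ hmem)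

lemma aux_gamma_mem {S : Set ℕ} (hS : IsNumSgp S) (hne : S ≠ Set.univ) (x : ℕ) :
    x ∈ gamma S ↔ x ∉ S ∧ nF S / mult S * mult S ≤ x ∧ x ≤ nF S := by
  have hfloor : ⌊(Frob S : ℚ) / (mult S : ℚ)⌋ = ((nF S / mult S : ℕ) : ℤ) := by
    rw [aux_Frob_eq hS hne]
    have : ((nF S : ℤ) : ℚ) / ((mult S : ℕ) : ℚ) = ((nF S : ℤ) : ℚ) / ((mult S : ℕ) : ℚ) := rfl
    rw [show ((nF S : ℤ) : ℚ) = (((nF S : ℕ) : ℤ) : ℚ) from rfl]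
    rw [Rat.floor_intCast_div_natCast]
    exact (Int.natCast_div (nF S) (mult S)).symm
  unfold gamma
  rw [Set.mem_setOf_eq, hfloor, aux_Frob_eq hS hne]
  constructor
  · rintro ⟨h1, h2, h3⟩
    exact ⟨h1, by exact_mod_cast h2, by exact_mod_cast h3⟩
  · rintro ⟨h1, h2, h3⟩
    exact ⟨h1, by exact_mod_cast h2, by exact_mod_cast h3⟩

lemma aux_gamma_eq {S : Set ℕ} (hS : IsNumSgp S) (hne : S ≠ Set.univ) :
    S ∪ gamma S = S ∪ Set.Ici (nF S / mult S * mult S) := by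
  obtain ⟨hF, hF1, hbig⟩ := aux_nF_mem hS hne
  ext x
  simp only [Set.mem_union, Set.mem_Ici, aux_gamma_mem hS hne]
  constructor
  · rintro (h | ⟨h1, h2, h3⟩)
    · exact Or.inl h
    · exact Or.inr h2
  · rintro (h | h)
    · exact Or.inl h
    · by_cases hx : x ∈ S
      · exact Or.inl hx
      · refine Or.inr ⟨hx, h, ?_⟩
        by_contra hle
        exact hx (hbig x (by omega))

lemma aux_step {S : Set ℕ} (hS : IsNumSgp S) (hne : S ≠ Set.univ) :
    IsNumSgp (S ∪ gamma S) ∧ IsIdealOf (S \ {0}) (S ∪ gamma S) ∧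
    (nF S < mult S → S ∪ gamma S = Set.univ) ∧
    (mult S ≤ nF S → S ∪ gamma S ≠ Set.univ ∧
      nF (S ∪ gamma S) / mult (S ∪ gamma S) + 1 = nF S / mult S) := by
  obtain ⟨hF, hF1, hbig⟩ := aux_nF_mem hS hne
  obtain ⟨hmS, hm2, hmin⟩ := aux_mult_mem hS hne
  have hqm_le : nF S / mult S * mult S ≤ nF S := Nat.div_mul_le_self _ _
  have hF_lt : nF S < nF S / mult S * mult S + mult S := by
    have h1 : nF S / mult S * mult S + nF S % mult S = nF S := by
      rw [Nat.mul_comm]; exact Nat.div_add_mod _ _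
    have h2 : nF S % mult S < mult S := Nat.mod_lt _ (by omega)
    omega
  have hTeq : S ∪ gamma S = S ∪ Set.Ici (nF S / mult S * mult S) := aux_gamma_eq hS hne
  have hmemT : ∀ x : ℕ, x ∈ S ∪ gamma S ↔ x ∈ S ∨ nF S / mult S * mult S ≤ x := by
    intro x; rw [hTeq]; simp [Set.mem_union]
  have hTsgp : IsNumSgp (S ∪ gamma S) := by
    refine ⟨(hmemT 0).mpr (Or.inl hS.1), ?_, ?_⟩
    · intro a ha b hb
      rw [hmemT] at ha hb ⊢
      rcases ha with ha | ha
      · rcases hb with hb | hb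
        · exact Or.inl (hS.2.1 a ha b hb)
        · exact Or.inr (by omega)
      · exact Or.inr (by omega)
    · refine hS.2.2.subset fun x hx => ?_
      intro hxS
      exact hx ((hmemT x).mpr (Or.inl hxS))
  have hideal : IsIdealOf (S \ {0}) (S ∪ gamma S) := by
    refine ⟨⟨mult S, hmS, by simp; omega⟩, fun x hx => (hmemT x).mpr (Or.inl hx.1), ?_⟩
    intro a ha b hb
    rcases ha with ⟨haS, ha0⟩
    simp only [Set.mem_singleton_iff] at ha0
    have ham : mult S ≤ a := hmin a haS ha0
    rw [hmemT] at hb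
    rcases hb with hb | hb
    · exact ⟨hS.2.1 a haS b hb, by simp; omega⟩
    · have : nF S < a + b := by omega
      exact ⟨hbig _ this, by simp; omega⟩
  refine ⟨hTsgp, hideal, ?_, ?_⟩
  · intro hlt
    have hq0 : nF S / mult S = 0 := Nat.div_eq_of_lt hlt
    ext x
    simp only [Set.mem_univ, iff_true]
    exact (hmemT x).mpr (Or.inr (by simp [hq0]))
  · intro hge
    have hq1 : 1 ≤ nF S / mult S := (Nat.one_le_div_iff (by omega)).mpr hge
    have hml : mult S ≤ nF S / mult S * mult S :=
      Nat.le_mul_of_pos_left _ hq1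
    have hFmS : nF S - mult S ∉ S := by
      intro h
      have h2 : (nF S - mult S) + mult S ∈ S := hS.2.1 _ h (mult S) hmS
      rw [Nat.sub_add_cancel hge] at h2
      exact hF h2
    have hFmT : nF S - mult S ∉ S ∪ gamma S := by
      rw [hmemT]
      push_neg
      exact ⟨hFmS, by omega⟩
    have hTne : S ∪ gamma S ≠ Set.univ := fun h => hFmT (h ▸ Set.mem_univ _)
    refine ⟨hTne, ?_⟩
    obtain ⟨hFT, hFT1, hbigT⟩ := aux_nF_mem hTsgp hTne
    obtain ⟨hmT, hmT2, hminT⟩ := aux_mult_mem hTsgp hTne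
    have hmultT : mult (S ∪ gamma S) = mult S := by
      have h1 : mult (S ∪ gamma S) ≤ mult S :=
        hminT (mult S) ((hmemT (mult S)).mpr (Or.inl hmS)) (by omega)
      have h2 : mult S ≤ mult (S ∪ gamma S) := by
        rcases (hmemT (mult (S ∪ gamma S))).mp hmT with h | h
        · exact hmin _ h (by omega)
        · omega
      omega
    have hnFT_ge : nF S - mult S ≤ nF (S ∪ gamma S) := by
      by_contra hlt
      exact hFmT (hbigT _ (by omega))
    have hnFT_lt : nF (S ∪ gamma S) < nF S / mult S * mult S := by
      by_contra hge2
      exact hFT ((hmemT _).mpr (Or.inr (by omega)))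
    rw [hmultT]
    have hdivT : nF (S ∪ gamma S) / mult S = nF S / mult S - 1 := by
      have hsub : (nF S / mult S - 1) * mult S = nF S / mult S * mult S - mult S :=
        Nat.sub_one_mul _ _
      have hlow : (nF S / mult S - 1) * mult S ≤ nF (S ∪ gamma S) := by omega
      have hhigh : nF (S ∪ gamma S) < (nF S / mult S - 1 + 1) * mult S := by
        have heq : nF S / mult S - 1 + 1 = nF S / mult S := by omega
        rw [heq]; exact hnFT_lt
      exact Nat.div_eq_of_lt_le hlow hhigh
    rw [hdivT]
    omega

lemma aux_B1 : ∀ q : ℕ, ∀ S : Set ℕ, IsNumSgp S → S ≠ Set.univ → nF S / mult S = q →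
    S ∈ Jiter (q + 1) := by
  intro q
  induction q with
  | zero =>
    intro S hS hne hq
    obtain ⟨hTsgp, hideal, hsmall, _⟩ := aux_step hS hne
    obtain ⟨_, hm2, _⟩ := aux_mult_mem hS hne
    have hlt : nF S < mult S := by
      by_contra hge
      have := (Nat.one_le_div_iff (by omega)).mpr (le_of_not_gt hge)
      omega
    have hT : S ∪ gamma S = Set.univ := hsmall hlt
    exact ⟨hS, Set.univ, rfl, hT ▸ hideal⟩
  | succ q ih =>
    intro S hS hne hq
    obtain ⟨hTsgp, hideal, _, hbigcase⟩ := aux_step hS hne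
    obtain ⟨_, hm2, _⟩ := aux_mult_mem hS hne
    have hge : mult S ≤ nF S := by
      by_contra hlt
      rw [Nat.div_eq_of_lt (lt_of_not_ge hlt)] at hq
      omega
    obtain ⟨hTne, hTd⟩ := hbigcase hge
    have hTq : nF (S ∪ gamma S) / mult (S ∪ gamma S) = q := by omega
    exact ⟨hS, S ∪ gamma S, ih _ hTsgp hTne hTq, hideal⟩

lemma aux_B2 : ∀ k : ℕ, ∀ S : Set ℕ, S ∈ Jiter k → S ≠ Set.univ →
    nF S / mult S + 1 ≤ k := by
  intro k
  induction k with
  | zero => intro S hSk hne; exact absurd hSk hne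
  | succ k ih =>
    intro S hSk hne
    obtain ⟨hS, Δ, hΔk, hne', hsub, hadd⟩ := hSk
    obtain ⟨hF, hF1, hbig⟩ := aux_nF_mem hS hne
    obtain ⟨hmS, hm2, hmin⟩ := aux_mult_mem hS hne
    have hmem : mult S ∈ S \ {0} := ⟨hmS, by simp; omega⟩
    by_cases hΔu : Δ = Set.univ
    · -- every x ≥ mult S is in S, so nF S < mult S
      have hall : ∀ x, mult S ≤ x → x ∈ S := by
        intro x hx
        have := hadd (mult S) hmem (x - mult S) (hΔu ▸ Set.mem_univ _)
        have h2 : mult S + (x - mult S) = x := by omega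
        exact (h2 ▸ this).1
      have hlt : nF S < mult S := by
        by_contra hge
        exact hF (hall _ (le_of_not_gt hge))
      rw [Nat.div_eq_of_lt hlt]
      omega
    · have hΔsgp : IsNumSgp Δ := by
        cases k with
        | zero => exact absurd hΔk hΔu
        | succ k' => exact hΔk.1
      obtain ⟨hFΔ, hFΔ1, hbigΔ⟩ := aux_nF_mem hΔsgp hΔu
      obtain ⟨hmΔ, hmΔ2, hminΔ⟩ := aux_mult_mem hΔsgp hΔu
      have hmle : mult Δ ≤ mult S := hminΔ _ (hsub hmem) (by omega)
      have hFle : nF S ≤ nF Δ + mult S := by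
        by_contra hgt
        apply hF
        have hx : nF Δ < nF S - mult S := by omega
        have := hadd (mult S) hmem (nF S - mult S) (hbigΔ _ hx)
        have h2 : mult S + (nF S - mult S) = nF S := by omega
        exact (h2 ▸ this).1
      have hstep1 : nF S / mult S ≤ (nF Δ + mult S) / mult S :=
        Nat.div_le_div_right hFle
      have hstep2 : (nF Δ + mult S) / mult S = nF Δ / mult S + 1 :=
        Nat.add_div_right _ (by omega)
      have hstep3 : nF Δ / mult S ≤ nF Δ / mult Δ :=
        Nat.div_le_div_left hmle (by omega)
      have := ih Δ hΔk hΔu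
      omega

lemma aux_complexity {S : Set ℕ} (hS : IsNumSgp S) (hne : S ≠ Set.univ) :
    complexity S = nF S / mult S + 1 := by
  have hmem : nF S / mult S + 1 ∈ {k | S ∈ Jiter k} := aux_B1 _ S hS hne rfl
  have h1 : complexity S ≤ nF S / mult S + 1 := Nat.sInf_le hmem
  have h2 : complexity S ∈ {k | S ∈ Jiter k} := Nat.sInf_mem ⟨_, hmem⟩
  have h3 := aux_B2 _ S h2 hne
  omega


/-- the sequence `S_0 = S`, `S_{n+1} = S_n ∪ γ(S_n)` reaches `ℕ`
exactly at index `C(S)`. -/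
theorem stmt16 (S : Set ℕ) (hS : IsNumSgp S) (c : ℕ → Set ℕ) (hc0 : c 0 = S)
    (hstep : ∀ n : ℕ, (c n ≠ Set.univ → c (n + 1) = c n ∪ gamma (c n)) ∧
      (c n = Set.univ → c (n + 1) = Set.univ)) :
    c (complexity S) = Set.univ ∧ ∀ n < complexity S, c n ≠ Set.univ := by
  by_cases hne : S = Set.univ
  · have hc : complexity S = 0 := by
      have : (0 : ℕ) ∈ {k | S ∈ Jiter k} := by
        simp [Jiter, hne]
      exact Nat.le_zero.mp (Nat.sInf_le this)
    rw [hc, hc0]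
    exact ⟨hne, fun n hn => absurd hn (Nat.not_lt_zero n)⟩
  · have hC : complexity S = nF S / mult S + 1 := aux_complexity hS hne
    have key : ∀ n, n < complexity S →
        IsNumSgp (c n) ∧ c n ≠ Set.univ ∧
          nF (c n) / mult (c n) + 1 + n = complexity S := by
      intro n
      induction n with
      | zero =>
        intro _
        rw [hc0]
        exact ⟨hS, hne, by omega⟩
      | succ n ih =>
        intro hn
        obtain ⟨h1, h2, h3⟩ := ih (by omega)
        obtain ⟨_, hm2, _⟩ := aux_mult_mem h1 h2
        have hge : mult (c n) ≤ nF (c n) := by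
          by_contra hlt
          rw [Nat.div_eq_of_lt (lt_of_not_ge hlt)] at h3
          omega
        obtain ⟨hTsgp, _, _, hbigcase⟩ := aux_step h1 h2
        obtain ⟨hTne, hTd⟩ := hbigcase hge
        have hceq : c (n + 1) = c n ∪ gamma (c n) := (hstep n).1 h2
        rw [hceq]
        exact ⟨hTsgp, hTne, by omega⟩
    have hC1 : 1 ≤ complexity S := by rw [hC]; exact Nat.le_add_left 1 _
    refine ⟨?_, fun n hn => (key n hn).2.1⟩
    obtain ⟨h1, h2, h3⟩ := key (complexity S - 1) (by omega)
    obtain ⟨_, hm2, _⟩ := aux_mult_mem h1 h2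
    have hlt : nF (c (complexity S - 1)) < mult (c (complexity S - 1)) := by
      by_contra hge
      have := (Nat.one_le_div_iff (show 0 < mult (c (complexity S - 1)) by omega)).mpr
        (le_of_not_gt hge)
      omega
    obtain ⟨_, _, hsmall, _⟩ := aux_step h1 h2
    have hceq : c (complexity S - 1 + 1) = c (complexity S - 1) ∪ gamma (c (complexity S - 1)) :=
      (hstep _).1 h2
    have : c (complexity S - 1 + 1) = Set.univ := by rw [hceq]; exact hsmall hlt
    have heq : complexity S - 1 + 1 = complexity S := by omega
    rwa [heq] at this
end

section
/- Let m ∈ ℕ with m ≥ 2 and let T be a numerical semigroup with m(T) = m. Then the set of numerical semigroups S with m(S) = m and S ∪ γ(S) = T equals the set {T \ A : A is nonempty and A ⊆ {x ∈ msg(T) : x > (⌊F(T)/m⌋ + 1)·m}}. -/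
lemma frob_eq_nat (S : Set ℕ) (f : ℕ) (hf : f ∉ S) (hfa : ∀ x, f < x → x ∈ S) :
    Frob S = (f : ℤ) := by
  apply le_antisymm
  · apply csSup_le ⟨(f : ℤ), ?_⟩
    · rintro z hz
      by_contra h
      push_neg at h
      have hz0 : 0 ≤ z := le_trans (Int.ofNat_nonneg f) (le_of_lt h)
      have : z.toNat ∈ S := hfa _ (by omega)
      exact hz ⟨z.toNat, this, by omega⟩
    · rintro ⟨n, hn, hnn⟩
      exact hf (by rwa [Nat.cast_inj.mp hnn] at hn)
  · apply le_csSup ⟨(f : ℤ), ?_⟩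
    · rintro ⟨n, hn, hnn⟩
      exact hf (by rwa [Nat.cast_inj.mp hnn] at hn)
    · rintro z hz
      by_contra h
      push_neg at h
      have hz0 : 0 ≤ z := le_trans (Int.ofNat_nonneg f) (le_of_lt h)
      have : z.toNat ∈ S := hfa _ (by omega)
      exact hz ⟨z.toNat, this, by omega⟩

lemma floor_div_nat (f m : ℕ) (hm : 0 < m) : ⌊(f : ℚ) / (m : ℚ)⌋ = ((f / m : ℕ) : ℤ) := by
  rw [Int.floor_eq_iff]
  have hm' : (0:ℚ) < (m:ℚ) := by exact_mod_cast hm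
  constructor
  · rw [le_div_iff₀ hm']
    push_cast
    exact_mod_cast (by exact_mod_cast Nat.div_mul_le_self f m : ((f / m * m : ℕ) : ℚ) ≤ (f : ℚ))
  · rw [div_lt_iff₀ hm']
    have : f < (f / m + 1) * m := by
      have := Nat.div_add_mod f m
      have := Nat.mod_lt f hm
      nlinarith
    push_cast
    exact_mod_cast this

lemma mult_eq_of (S : Set ℕ) (m : ℕ) (hmem : m ∈ S) (hm0 : m ≠ 0)
    (hmin : ∀ x ∈ S, x ≠ 0 → m ≤ x) : mult S = m := by
  apply le_antisymm (Nat.sInf_le (Set.mem_diff_singleton.mpr ⟨hmem, hm0⟩))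
  apply le_csInf ⟨m, Set.mem_diff_singleton.mpr ⟨hmem, hm0⟩⟩
  rintro x hx
  exact hmin x hx.1 (by simpa using hx.2)

lemma mult_spec (S : Set ℕ) (hfin : Sᶜ.Finite) :
    mult S ∈ S ∧ mult S ≠ 0 ∧ ∀ x ∈ S, x ≠ 0 → mult S ≤ x := by
  have hinf : S.Infinite := by
    have := Set.Finite.infinite_compl hfin
    rwa [compl_compl] at this
  have h2 : (S \ {0}).Infinite := hinf.diff (Set.finite_singleton 0)
  have hmem := Nat.sInf_mem h2.nonempty
  exact ⟨hmem.1, by simpa [mult] using hmem.2,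
    fun x hx hx0 => Nat.sInf_le (Set.mem_diff_singleton.mpr ⟨hx, hx0⟩)⟩

lemma exists_max_mem (A : Set ℕ) (hfin : A.Finite) (hne : A.Nonempty) :
    ∃ f ∈ A, ∀ a ∈ A, a ≤ f := by
  classical
  have htne : hfin.toFinset.Nonempty := by
    rwa [Set.Finite.toFinset_nonempty]
  refine ⟨hfin.toFinset.max' htne, ?_, ?_⟩
  · have := hfin.toFinset.max'_mem htne
    rwa [Set.Finite.mem_toFinset] at this
  · intro a ha
    exact hfin.toFinset.le_max' a (by rwa [Set.Finite.mem_toFinset])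

lemma mul_mem_sgp (S : Set ℕ) (h0 : 0 ∈ S) (hadd : ∀ a ∈ S, ∀ b ∈ S, a + b ∈ S)
    (m : ℕ) (hm : m ∈ S) : ∀ k, k * m ∈ S := by
  intro k
  induction k with
  | zero => simpa using h0
  | succ n ih => simpa [Nat.succ_mul] using hadd _ ih _ hm

lemma gamma_eq_s17 (S : Set ℕ) (m f : ℕ) (hm : 0 < m) (hmS : mult S = m)
    (hfS : Frob S = (f : ℤ)) :
    gamma S = {x : ℕ | x ∉ S ∧ (f / m) * m ≤ x ∧ x ≤ f} := by
  unfold gamma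
  rw [hmS, hfS, show (((f : ℤ) : ℚ)) = ((f : ℚ)) by push_cast; ring, floor_div_nat f m hm]
  ext x
  simp only [Set.mem_setOf_eq]
  constructor <;> rintro ⟨h1, h2, h3⟩ <;>
    exact ⟨h1, by exact_mod_cast h2, by exact_mod_cast h3⟩

lemma not_mem_closure_diff (T : Set ℕ) (x : ℕ) (h0 : 0 ∈ T)
    (hadd : ∀ a ∈ T, ∀ b ∈ T, a + b ∈ T) (hx0 : x ≠ 0)
    (hsum : ∀ a ∈ T, ∀ b ∈ T, a ≠ 0 → b ≠ 0 → a + b ≠ x) :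
    x ∉ (AddSubmonoid.closure (T \ {x}) : Set ℕ) := by
  let M : AddSubmonoid ℕ :=
  { carrier := T \ {x}
    zero_mem' := ⟨h0, fun h => hx0 (by simpa using h.symm)⟩
    add_mem' := by
      rintro a b ⟨ha, hax⟩ ⟨hb, hbx⟩
      refine ⟨hadd a ha b hb, ?_⟩
      rcases eq_or_ne a 0 with rfl | ha0
      · simpa using hbx
      rcases eq_or_ne b 0 with rfl | hb0
      · simpa using hax
      · simpa using hsum a ha b hb ha0 hb0 }
  intro hx
  have hle : AddSubmonoid.closure (T \ {x}) ≤ M :=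
    AddSubmonoid.closure_le.mpr (fun y hy => hy)
  have : x ∈ T \ {x} := hle hx
  exact this.2 rfl

/-- the children of `T` in the tree `G(m)` are exactly the sets
`T \ A` with `∅ ≠ A ⊆ {x ∈ msg(T) : x > (⌊F(T)/m⌋ + 1)·m}`. -/
theorem stmt17 (m : ℕ) (hm : 2 ≤ m) (T : Set ℕ) (hT : IsNumSgp T)
    (hmT : mult T = m) :
    {S : Set ℕ | IsNumSgp S ∧ mult S = m ∧ S ∪ gamma S = T}
      = {U : Set ℕ | ∃ A : Set ℕ, A.Nonempty ∧
          A ⊆ {x ∈ msg T | (⌊(Frob T : ℚ) / (m : ℚ)⌋ + 1) * (m : ℤ) < (x : ℤ)} ∧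
          U = T \ A} := by
  obtain ⟨hT0, hTadd, hTfin⟩ := hT
  obtain ⟨hmmem, hmne, hmmin⟩ := mult_spec T hTfin
  rw [hmT] at hmmem hmmin
  have hm0 : 0 < m := by omega
  have h1T : 1 ∉ T := fun h => by have := hmmin 1 h one_ne_zero; omega
  obtain ⟨fT, hfT, hfTmax⟩ := exists_max_mem Tᶜ hTfin ⟨1, h1T⟩
  have hfTall : ∀ x, fT < x → x ∈ T := by
    intro x hx
    by_contra h
    have := hfTmax x h
    omega
  have hFT : Frob T = (fT : ℤ) := frob_eq_nat T fT hfT hfTall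
  set q := fT / m with hq
  have hfloorT : ⌊(Frob T : ℚ) / (m : ℚ)⌋ = (q : ℤ) := by
    rw [hFT]; exact floor_div_nat fT m hm0
  have hqm : q * m ≤ fT := Nat.div_mul_le_self fT m
  have hqm2 : fT < (q + 1) * m := by
    have h1 : m * q + fT % m = fT := by rw [hq]; exact Nat.div_add_mod fT m
    have h2 := Nat.mod_lt fT hm0
    have h3 : (q + 1) * m = m * q + m := by ring
    omega
  have hmq : m ≤ (q + 1) * m := Nat.le_mul_of_pos_left m (Nat.succ_pos q)
  have hmulT : ∀ k, k * m ∈ T := mul_mem_sgp T hT0 hTadd m hmmem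
  ext S
  simp only [Set.mem_setOf_eq]
  constructor
  · rintro ⟨⟨hS0, hSadd, hSfin⟩, hmS, hU⟩
    obtain ⟨hmSmem, hmSne, hmSmin⟩ := mult_spec S hSfin
    rw [hmS] at hmSmem hmSmin
    have h1S : 1 ∉ S := fun h => by have := hmSmin 1 h one_ne_zero; omega
    obtain ⟨fS, hfS, hfSmax⟩ := exists_max_mem Sᶜ hSfin ⟨1, h1S⟩
    have hfSall : ∀ x, fS < x → x ∈ S := by
      intro x hx
      by_contra h
      have := hfSmax x h
      omega
    have hFS : Frob S = (fS : ℤ) := frob_eq_nat S fS hfS hfSall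
    set qS := fS / m with hqS
    have hgam : gamma S = {x : ℕ | x ∉ S ∧ qS * m ≤ x ∧ x ≤ fS} :=
      gamma_eq_s17 S m fS hm0 hmS hFS
    have hmulS : ∀ k, k * m ∈ S := mul_mem_sgp S hS0 hSadd m hmSmem
    have hqSm1 : qS * m ≤ fS := Nat.div_mul_le_self fS m
    have hqSm2 : fS < qS * m + m := by
      have h1 : m * qS + fS % m = fS := by rw [hqS]; exact Nat.div_add_mod fS m
      have h2 := Nat.mod_lt fS hm0
      have h3 : m * qS = qS * m := by ring
      omega
    set A := gamma S with hA
    have hdisj : ∀ x ∈ A, x ∉ S := by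
      intro x hx
      rw [hgam] at hx
      exact hx.1
    have hST : S ⊆ T := by rw [← hU]; exact Set.subset_union_left
    have hAT : A ⊆ T := by rw [← hU]; exact Set.subset_union_right
    have hTsplit : ∀ x, x ∈ T ↔ x ∈ S ∨ x ∈ A := by
      intro x; rw [← hU]; rfl
    have hkey : fT < qS * m := by
      by_contra h
      push_neg at h
      have h1 : fT ∉ S := fun h' => hfT (hST h')
      have h2 : fT ∈ A := by
        rw [hgam]
        exact ⟨h1, h, hfSmax fT h1⟩
      exact hfT (hAT h2)
    have hq1 : (q + 1) * m ≤ qS * m := by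
      have hqlt : q < qS := by
        by_contra h
        push_neg at h
        have := Nat.mul_le_mul_right m h
        omega
      exact Nat.mul_le_mul_right m (by omega)
    refine ⟨A, ⟨fS, by rw [hgam]; exact ⟨hfS, hqSm1, le_refl _⟩⟩, ?_, ?_⟩
    · intro x hx
      rw [hgam] at hx
      obtain ⟨hxS, hx1, hx2⟩ := hx
      have hxgt : (q + 1) * m < x := by
        rcases Nat.lt_or_ge ((q + 1) * m) x with h | h
        · exact h
        · have hxe : x = (q + 1) * m := le_antisymm h (le_trans hq1 hx1)
          exact absurd (hxe ▸ hmulS (q + 1)) hxS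
      have hxT : x ∈ T := hAT (by rw [hgam]; exact ⟨hxS, hx1, hx2⟩)
      refine ⟨⟨hxT, ?_⟩, ?_⟩
      · apply not_mem_closure_diff T x hT0 hTadd (by omega)
        intro a ha b hb ha0 hb0 heq
        rcases (hTsplit a).mp ha with haS | haA <;>
          rcases (hTsplit b).mp hb with hbS | hbA
        · exact hxS (heq ▸ hSadd a haS b hbS)
        · rw [hgam] at hbA
          obtain ⟨-, hb1, hb2⟩ := hbA
          have := hmmin a ha ha0
          omega
        · rw [hgam] at haA
          obtain ⟨-, ha1, ha2⟩ := haA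
          have := hmmin b hb hb0
          omega
        · rw [hgam] at haA
          obtain ⟨-, ha1, ha2⟩ := haA
          have := hmmin b hb hb0
          omega
      · rw [hfloorT]
        exact_mod_cast hxgt
    · ext x
      constructor
      · intro hx
        exact ⟨hST hx, fun h => hdisj x h hx⟩
      · rintro ⟨hxT, hxA⟩
        rcases (hTsplit x).mp hxT with h | h
        · exact h
        · exact absurd h hxA
  · rintro ⟨A, hAne, hAsub, rfl⟩
    have hAmem : ∀ a ∈ A, a ∈ T := fun a ha => (hAsub ha).1.1
    have hAgen : ∀ a ∈ A, a ∉ (AddSubmonoid.closure (T \ {a}) : Set ℕ) :=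
      fun a ha => (hAsub ha).1.2
    have hAgt : ∀ a ∈ A, (q + 1) * m < a := by
      intro a ha
      have := (hAsub ha).2
      rw [hfloorT] at this
      exact_mod_cast this
    have hAle : ∀ a ∈ A, a ≤ fT + m := by
      intro a ha
      by_contra h
      push_neg at h
      have hgt := hAgt a ha
      have ham : a - m ∈ T := hfTall _ (by omega)
      apply hAgen a ha
      have h1 : a - m ∈ T \ {a} := ⟨ham, by simp; omega⟩
      have h2 : m ∈ T \ {a} := ⟨hmmem, by simp; omega⟩
      have := AddSubmonoid.add_mem _ (AddSubmonoid.subset_closure h1)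
        (AddSubmonoid.subset_closure h2)
      have heq : a - m + m = a := by omega
      rw [heq] at this
      exact this
    have hS0 : (0 : ℕ) ∈ T \ A :=
      ⟨hT0, fun h => Nat.not_lt_zero _ (hAgt 0 h)⟩
    have hSadd : ∀ a ∈ T \ A, ∀ b ∈ T \ A, a + b ∈ T \ A := by
      rintro a ⟨haT, haA⟩ b ⟨hbT, hbA⟩
      refine ⟨hTadd a haT b hbT, fun hab => ?_⟩
      rcases eq_or_ne a 0 with rfl | ha0
      · exact hbA (by simpa using hab)
      rcases eq_or_ne b 0 with rfl | hb0
      · exact haA (by simpa using hab)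
      apply hAgen _ hab
      exact AddSubmonoid.add_mem _
        (AddSubmonoid.subset_closure ⟨haT, by simp; omega⟩)
        (AddSubmonoid.subset_closure ⟨hbT, by simp; omega⟩)
    have hAfin : A.Finite :=
      Set.Finite.subset (Set.finite_Iic (fT + m)) (fun a ha => hAle a ha)
    have hSfin : (T \ A)ᶜ.Finite := by
      have hc : (T \ A)ᶜ = Tᶜ ∪ A := by
        ext x
        simp only [Set.mem_compl_iff, Set.mem_diff, Set.mem_union]
        tauto
      rw [hc]
      exact hTfin.union hAfin
    obtain ⟨fA, hfAA, hfAmax⟩ := exists_max_mem A hAfin hAne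
    have hfA1 : (q + 1) * m < fA := hAgt _ hfAA
    have hfAS : fA ∉ T \ A := fun h => h.2 hfAA
    have hfAall : ∀ x, fA < x → x ∈ T \ A := by
      intro x hx
      refine ⟨hfTall x (by omega), fun h => ?_⟩
      have := hfAmax x h
      omega
    have hFS : Frob (T \ A) = (fA : ℤ) := frob_eq_nat _ fA hfAS hfAall
    have hmS : mult (T \ A) = m := by
      have hmem' : m ∈ T \ A := ⟨hmmem, fun h => by have := hAgt m h; omega⟩
      apply mult_eq_of _ m hmem' (by omega)
      intro x hx hx0
      exact hmmin x hx.1 hx0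
    have hdiv : fA / m = q + 1 := by
      apply Nat.div_eq_of_lt_le (le_of_lt hfA1)
      have hfAle : fA ≤ fT + m := hAle _ hfAA
      have : (q + 1 + 1) * m = (q + 1) * m + m := by ring
      omega
    have hgam : gamma (T \ A) = {x : ℕ | x ∉ T \ A ∧ (q + 1) * m ≤ x ∧ x ≤ fA} := by
      have h := gamma_eq_s17 (T \ A) m fA hm0 hmS hFS
      rw [hdiv] at h
      exact h
    have hgamA : gamma (T \ A) = A := by
      rw [hgam]
      ext x
      simp only [Set.mem_setOf_eq]
      constructor
      · rintro ⟨hx1, hx2, hx3⟩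
        by_contra hxA
        have hxT : x ∉ T := fun h => hx1 ⟨h, hxA⟩
        have := hfTmax x hxT
        omega
      · intro hx
        exact ⟨fun h => h.2 hx, le_of_lt (hAgt _ hx), hfAmax _ hx⟩
    refine ⟨⟨hS0, hSadd, hSfin⟩, hmS, ?_⟩
    rw [hgamA]
    ext x
    simp only [Set.mem_union, Set.mem_diff]
    constructor
    · rintro (⟨h, _⟩ | h)
      · exact h
      · exact hAmem _ h
    · intro h
      by_cases hx : x ∈ A
      · exact Or.inr hx
      · exact Or.inl ⟨h, hx⟩
end
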